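/- For every broadcasted party-list election E = (N, C, k, l, A, L) with parties P_1, …, P_g whose popularities are strictly decreasing (n_1 > n_2 > … > n_g) and in which every party has at least l candidates (|P_i| ≥ l for all i), and for every winning committee W ∈ LV(E), it holds that s_CC(A, W) ≥ (⌈k/l⌉ / k) · max_{W' ⊆ C, |W'| = k} s_CC(A, W'). -/

import Mathlib

open Finset

/-- An election `E = (N, C, k, l, A, L)`: voters form the finite type `V`,
candidates the finite type `C`, `k` is the committee size, `l` the ballot limit,
`A i` is the approval set of voter `i` and `L i` their ballot. -/
structure Election (V C : Type*) [Fintype V] [DecidableEq V] [Fintype C] [DecidableEq C] where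
  k : ℕ
  l : ℕ
  A : V → Finset C
  L : V → Finset C
  k_le_card : k ≤ Fintype.card C
  one_le_l : 1 ≤ l
  l_le_k : l ≤ k
  ballot_card : ∀ i, (L i).card = l
  ballot_sub_approval : ∀ i, l ≤ (A i).card → L i ⊆ A i
  approval_ssub_ballot : ∀ i, (A i).card < l → A i ⊂ L i

variable {V C : Type*} [Fintype V] [DecidableEq V] [Fintype C] [DecidableEq C]

/-- The LV-score of a candidate: the number of voters whose ballot contains it. -/
def sLVc (E : Election V C) (c : C) : ℕ := (univ.filter fun i => c ∈ E.L i).card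

/-- The AV-score of a candidate: the number of voters approving it. -/
def sAVc (E : Election V C) (c : C) : ℕ := (univ.filter fun i => c ∈ E.A i).card

/-- The LV-score of a committee. -/
def sLV (E : Election V C) (W : Finset C) : ℕ := ∑ c ∈ W, sLVc E c

/-- The AV-score of a committee. -/
def sAV (E : Election V C) (W : Finset C) : ℕ := ∑ c ∈ W, sAVc E c

/-- The winning committees of Limited Voting: size-`k` committees maximizing the LV-score. -/
def LVwin (E : Election V C) : Set (Finset C) :=
  {W | W.card = E.k ∧ ∀ W' : Finset C, W'.card = E.k → sLV E W' ≤ sLV E W}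

/-- The winning committees of Approval Voting: size-`k` committees maximizing the AV-score. -/
def AVwin (E : Election V C) : Set (Finset C) :=
  {W | W.card = E.k ∧ ∀ W' : Finset C, W'.card = E.k → sAV E W' ≤ sAV E W}

/-- The Chamberlin–Courant score of a committee: the number of represented voters. -/
def sCC (E : Election V C) (W : Finset C) : ℕ :=
  (univ.filter fun i => (W ∩ E.A i).Nonempty).card

/-- `A` is a party-list profile: approval sets are nonempty and pairwise equal or disjoint. -/
def PartyList (E : Election V C) : Prop :=
  (∀ i, (E.A i).Nonempty) ∧ ∀ i j : V, E.A i = E.A j ∨ E.A i ∩ E.A j = ∅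

/-- `E` is consistent with some broadcasting (linear) order on candidates, encoded by an
injective priority function `f` (`f c < f c'` meaning `c ≻ c'`). -/
def Broadcasted (E : Election V C) : Prop :=
  ∃ f : C → ℕ, Function.Injective f ∧
    ∀ (i : V) (c c' : C), c ∈ E.A i → c' ∈ E.A i → c ∈ E.L i → c' ∉ E.L i → f c < f c'

/-- The number of voters of party `Pj`. -/
def nParty (E : Election V C) (Pj : Finset C) : ℕ := (univ.filter fun i => E.A i = Pj).card

/-!
Within a party all voters cast the same ballot (two different ballots of size `l` inside the
same approval set would contradict the broadcasting order), so the LV-score of a candidate is the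
size `n_j` of the party whose ballot contains it, and `0` if no ballot does. An LV-winning
committee `W` meets each of the `⌈k/l⌉` largest parties: if it missed the `j`-th largest, exchanging
one of its members for a candidate on that party's ballot shows that all its members score at
least `n_j`, so they lie on the ballots of the `j - 1` larger parties and `k ≤ (j - 1) l`. Hence
`s_CC(W) ≥ n_1 + ⋯ + n_⌈k/l⌉`, whereas a committee of size `k` meets at most `k` parties, so
`s_CC(W') ≤ n_1 + ⋯ + n_k`. Since the `n_j` decrease, the mean of the first `⌈k/l⌉` of them is at
least the mean of the first `k` (Chebyshev's sum inequality).
-/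

open Function

section Sequences
variable {α : Type*}

theorem sum_le_sum_range_card_of_antitone [AddCommMonoid α] [PartialOrder α]
    [IsOrderedAddMonoid α] {a : ℕ → α} (ha : Antitone a) (T : Finset ℕ) :
    ∑ j ∈ T, a j ≤ ∑ i ∈ range #T, a i := by
  induction T using Finset.induction_on_max with
  | empty => simp
  | insert x s hlt ih =>
    have hx : x ∉ s := fun h => (hlt x h).false
    have hs : #s ≤ x := by simpa using card_le_card fun y hy => mem_range.2 (hlt y hy)
    rw [sum_insert hx, card_insert_of_notMem hx, sum_range_succ, add_comm]
    exact add_le_add ih (ha hs)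

theorem mul_sum_range_le_mul_sum_range_of_antitone [Semiring α] [LinearOrder α]
    [IsStrictOrderedRing α] [ExistsAddOfLE α] {a : ℕ → α} (ha : Antitone a) {m M : ℕ}
    (hmM : m ≤ M) : m * ∑ i ∈ range M, a i ≤ M * ∑ i ∈ range m, a i := by
  set b : ℕ → α := fun i => if i < m then 1 else 0
  have hb : Antitone b := fun i j hij => by
    simp only [b]; split_ifs <;> first | rfl | exact zero_le_one | omega
  have hfilter : (range M).filter (· < m) = range m := by
    ext; simp only [mem_filter, mem_range]; omega
  have hcheb := ((ha.monovary hb).monovaryOn (range M)).sum_mul_sum_le_card_mul_sum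
  simp only [b, sum_boole, mul_boole, ← sum_filter, hfilter, card_range] at hcheb
  rwa [Nat.cast_comm]

theorem extend_val_zero_of_le [Zero α] {g : ℕ} (a : Fin g → α) {i : ℕ} (hi : g ≤ i) :
    extend Fin.val a 0 i = 0 :=
  extend_apply' _ _ _ fun ⟨j, hj⟩ => by omega

theorem sum_eq_sum_map_extend_val [AddCommMonoid α] {g : ℕ} (a : Fin g → α)
    (T : Finset (Fin g)) :
    ∑ j ∈ T, a j = ∑ i ∈ T.map Fin.valEmbedding, extend Fin.val a 0 i := by
  simp only [sum_map, Fin.valEmbedding_apply, Fin.val_injective.extend_apply]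

theorem sum_range_extend_val_le_sum [AddCommMonoid α] [PartialOrder α] [CanonicallyOrderedAdd α]
    {g : ℕ} {a : Fin g → α} {T : Finset (Fin g)} {t : ℕ}
    (hT : ∀ j : Fin g, (j : ℕ) < t → j ∈ T) :
    ∑ i ∈ range t, extend Fin.val a 0 i ≤ ∑ j ∈ T, a j := by
  rw [sum_eq_sum_map_extend_val]
  refine sum_le_sum_of_ne_zero fun i hi hne => ?_
  have hig : i < g := not_le.1 fun h => hne (extend_val_zero_of_le a h)
  exact mem_map_of_mem _ (hT ⟨i, hig⟩ (mem_range.1 hi))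

theorem antitone_extend_val_zero [AddCommMonoid α] [PartialOrder α] [CanonicallyOrderedAdd α]
    {g : ℕ} {a : Fin g → α} (ha : Antitone a) : Antitone (extend Fin.val a 0) := by
  intro i j hij
  by_cases hj : j < g
  · obtain ⟨j, rfl⟩ : ∃ j' : Fin g, (j' : ℕ) = j := ⟨⟨j, hj⟩, rfl⟩
    obtain ⟨i, rfl⟩ : ∃ i' : Fin g, (i' : ℕ) = i := ⟨⟨i, by omega⟩, rfl⟩
    simpa only [Fin.val_injective.extend_apply] using ha hij
  · rw [extend_val_zero_of_le a (not_lt.1 hj)]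
    exact zero_le

theorem sum_le_sum_range_extend_val [AddCommMonoid α] [PartialOrder α] [IsOrderedAddMonoid α]
    [CanonicallyOrderedAdd α] {g : ℕ} {a : Fin g → α} (ha : Antitone a) {T : Finset (Fin g)}
    {k : ℕ} (hT : #T ≤ k) : ∑ j ∈ T, a j ≤ ∑ i ∈ range k, extend Fin.val a 0 i := by
  rw [sum_eq_sum_map_extend_val]
  calc _ ≤ ∑ i ∈ range #(T.map Fin.valEmbedding), extend Fin.val a 0 i :=
        sum_le_sum_range_card_of_antitone (antitone_extend_val_zero ha) _
    _ ≤ _ := sum_le_sum_of_subset (range_subset_range.2 (by rwa [card_map]))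

end Sequences

theorem card_filter_inter_nonempty_le {ι α : Type*} [Fintype ι] [DecidableEq α]
    {P : ι → Finset α} (hP : Pairwise (Disjoint on P)) (W : Finset α) :
    #(univ.filter fun j => (W ∩ P j).Nonempty) ≤ #W := by
  refine (card_le_card_biUnion (f := fun j => W ∩ P j) ?_ fun j hj => (mem_filter.1 hj).2).trans
    (card_le_card (biUnion_subset.2 fun j _ => inter_subset_left))
  exact fun j _ j' _ hjj' => (hP hjj').mono inter_subset_right inter_subset_right

section Election
variable (E : Election V C)

theorem ballot_eq_of_approval_eq (hB : Broadcasted E) {i i' : V} (hi : E.l ≤ #(E.A i))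
    (hA : E.A i = E.A i') : E.L i = E.L i' := by
  obtain ⟨f, -, hf⟩ := hB
  have hL := E.ballot_sub_approval i hi
  have hL' := E.ballot_sub_approval i' (hA ▸ hi)
  by_contra hne
  have hcard : #(E.L i) = #(E.L i') := by rw [E.ballot_card, E.ballot_card]
  obtain ⟨c, hc, hc'⟩ := not_subset.1 fun h => hne (eq_of_subset_of_card_le h hcard.ge)
  obtain ⟨d, hd', hd⟩ := not_subset.1 fun h => hne (eq_of_subset_of_card_le h hcard.le).symm
  have := hf i c d (hL hc) (hA ▸ hL' hd') hc hd
  have := hf i' d c (hL' hd') (hA ▸ hL hc) hd' hc'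
  omega

theorem sLVc_eq_nParty (hPL : PartyList E) (hB : Broadcasted E)
    (hAl : ∀ i, E.l ≤ #(E.A i)) {i : V} {c : C} (hc : c ∈ E.L i) :
    sLVc E c = nParty E (E.A i) := by
  unfold sLVc nParty
  congr 1
  ext i'
  simp only [mem_filter, mem_univ, true_and]
  constructor
  · intro hc'
    refine (hPL.2 i' i).resolve_right fun h => ?_
    have : c ∈ E.A i' ∩ E.A i :=
      mem_inter.2 ⟨E.ballot_sub_approval i' (hAl i') hc', E.ballot_sub_approval i (hAl i) hc⟩
    simp [h] at this
  · intro hA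
    rwa [ballot_eq_of_approval_eq E hB (hAl i') hA]

theorem sLVc_le_of_mem_LVwin {W : Finset C} (hW : W ∈ LVwin E) {b c : C} (hc : c ∈ W)
    (hb : b ∉ W) : sLVc E b ≤ sLVc E c := by
  have hbc : b ∉ W.erase c := fun h => hb (mem_of_mem_erase h)
  have hcard : #(insert b (W.erase c)) = E.k := by
    rw [card_insert_of_notMem hbc, card_erase_of_mem hc, ← hW.1]
    have := card_pos.2 ⟨c, hc⟩
    omega
  have hswap := hW.2 _ hcard
  unfold sLV at hswap
  rw [sum_insert hbc, ← add_sum_erase W _ hc] at hswap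
  omega

theorem exists_larger_party_of_disjoint_LVwin (hPL : PartyList E) (hB : Broadcasted E)
    (hAl : ∀ i, E.l ≤ #(E.A i)) {W : Finset C} (hW : W ∈ LVwin E) {i : V}
    (hWi : Disjoint W (E.A i)) {c : C} (hc : c ∈ W) :
    ∃ i', c ∈ E.L i' ∧ nParty E (E.A i) ≤ nParty E (E.A i') ∧ E.A i' ≠ E.A i := by
  obtain ⟨b, hb⟩ : (E.L i).Nonempty := by
    rw [← card_pos, E.ballot_card]; exact E.one_le_l
  have hbW : b ∉ W := disjoint_right.1 hWi (E.ballot_sub_approval i (hAl i) hb)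
  have hscore := sLVc_le_of_mem_LVwin E hW hc hbW
  rw [sLVc_eq_nParty E hPL hB hAl hb] at hscore
  have hpos : 0 < nParty E (E.A i) := card_pos.2 ⟨i, by simp⟩
  obtain ⟨i', hi'⟩ := card_pos.1 (hpos.trans_le hscore)
  have hci' : c ∈ E.L i' := (mem_filter.1 hi').2
  refine ⟨i', hci', sLVc_eq_nParty E hPL hB hAl hci' ▸ hscore, fun h => ?_⟩
  exact disjoint_left.1 hWi hc (h ▸ E.ballot_sub_approval i' (hAl i') hci')

variable {g : ℕ} (P : Fin g → Finset C)

/-- The party sizes `n_1 ≥ n_2 ≥ …`, indexed from `0` and padded with zeros after the last party. -/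
noncomputable def partySizes : ℕ → ℕ := extend Fin.val (fun j => nParty E (P j)) 0

variable {E P}

theorem pairwise_disjoint_parties (hPL : PartyList E) (hPrep : ∀ j, ∃ i, E.A i = P j)
    (hP : Injective P) : Pairwise (Disjoint on P) := fun j j' hjj' => by
  obtain ⟨i, hi⟩ := hPrep j
  obtain ⟨i', hi'⟩ := hPrep j'
  rcases hPL.2 i i' with h | h
  · exact absurd (hP (hi.symm.trans (h.trans hi'))) hjj'
  · rwa [hi, hi', ← disjoint_iff_inter_eq_empty] at h

theorem sCC_eq_sum_nParty (hPall : ∀ i, ∃ j, E.A i = P j) (hP : Injective P) (W : Finset C) :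
    sCC E W = ∑ j ∈ univ.filter (fun j => (W ∩ P j).Nonempty), nParty E (P j) := by
  choose π hπ using hPall
  have hmaps : ((univ.filter fun i => (W ∩ E.A i).Nonempty : Finset V) : Set V).MapsTo π
      (univ.filter fun j => (W ∩ P j).Nonempty) := fun i hi => by
    simpa [hπ i] using hi
  rw [sCC, card_eq_sum_card_fiberwise hmaps]
  refine sum_congr rfl fun j hj => congrArg card ?_
  ext i
  simp only [mem_filter, mem_univ, true_and] at hj ⊢
  constructor
  · rintro ⟨-, rfl⟩
    exact hπ i
  · intro hi
    exact ⟨hi ▸ hj, hP ((hπ i).symm.trans hi)⟩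

theorem sCC_le_sum_range_partySizes (hPL : PartyList E) (hPall : ∀ i, ∃ j, E.A i = P j)
    (hPrep : ∀ j, ∃ i, E.A i = P j) (hanti : StrictAnti fun j => nParty E (P j))
    (W : Finset C) : sCC E W ≤ ∑ i ∈ range #W, partySizes E P i := by
  have hP : Injective P := Injective.of_comp (f := nParty E) hanti.injective
  rw [sCC_eq_sum_nParty hPall hP]
  exact sum_le_sum_range_extend_val hanti.antitone
    (card_filter_inter_nonempty_le (pairwise_disjoint_parties hPL hPrep hP) W)

theorem inter_nonempty_of_mem_LVwin (hPL : PartyList E) (hB : Broadcasted E)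
    (hAl : ∀ i, E.l ≤ #(E.A i)) (hPall : ∀ i, ∃ j, E.A i = P j)
    (hPrep : ∀ j, ∃ i, E.A i = P j) (hanti : StrictAnti fun j => nParty E (P j))
    {W : Finset C} (hW : W ∈ LVwin E) {j : Fin g} (hj : E.l * j < E.k) :
    (W ∩ P j).Nonempty := by
  choose v hv using hPrep
  by_contra hWj
  rw [not_nonempty_iff_eq_empty, ← disjoint_iff_inter_eq_empty, ← hv j] at hWj
  have hsub : W ⊆ (Iio j).biUnion fun j' => E.L (v j') := by
    intro c hc
    obtain ⟨i, hci, hle, hne⟩ := exists_larger_party_of_disjoint_LVwin E hPL hB hAl hW hWj hc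
    obtain ⟨j', hj'⟩ := hPall i
    rw [hv j, hj'] at hle hne
    have hj'j : j' < j := (hanti.le_iff_ge.1 hle).lt_of_ne fun h => hne (h ▸ rfl)
    rw [ballot_eq_of_approval_eq E hB (hAl i) (hj'.trans (hv j').symm)] at hci
    exact mem_biUnion.2 ⟨j', mem_Iio.2 hj'j, hci⟩
  have hcard := (card_le_card hsub).trans card_biUnion_le
  simp only [E.ballot_card, sum_const, Fin.card_Iio, smul_eq_mul, hW.1] at hcard
  rw [mul_comm] at hj
  omega

theorem sum_range_partySizes_le_sCC (hPL : PartyList E) (hB : Broadcasted E)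
    (hAl : ∀ i, E.l ≤ #(E.A i)) (hPall : ∀ i, ∃ j, E.A i = P j)
    (hPrep : ∀ j, ∃ i, E.A i = P j) (hanti : StrictAnti fun j => nParty E (P j))
    {W : Finset C} (hW : W ∈ LVwin E) :
    ∑ i ∈ range (E.k ⌈/⌉ E.l), partySizes E P i ≤ sCC E W := by
  rw [sCC_eq_sum_nParty hPall (Injective.of_comp (f := nParty E) hanti.injective)]
  refine sum_range_extend_val_le_sum fun j hj => mem_filter.2 ⟨mem_univ _, ?_⟩
  rw [← not_le, ceilDiv_le_iff_le_mul E.one_le_l, not_le] at hj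
  exact inter_nonempty_of_mem_LVwin hPL hB hAl hPall hPrep hanti hW hj

end Election

/-- In every broadcasted party-list election with strictly decreasing party
popularities where every party has at least `l` candidates, every LV-winning committee
`W` satisfies `s_CC(A, W) ≥ (⌈k/l⌉ / k) · max_{|W'| = k} s_CC(A, W')`. -/
theorem stmt6 (E : Election V C) (hPL : PartyList E) (hB : Broadcasted E)
    (g : ℕ) (P : Fin g → Finset C)
    (hPall : ∀ i : V, ∃ j, E.A i = P j)
    (hPrep : ∀ j, ∃ i : V, E.A i = P j)
    (hanti : ∀ j j' : Fin g, j < j' → nParty E (P j') < nParty E (P j))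
    (hPl : ∀ j, E.l ≤ (P j).card) :
    ∀ W ∈ LVwin E, ∀ Wmax : Finset C, Wmax.card = E.k →
      (∀ W' : Finset C, W'.card = E.k → sCC E W' ≤ sCC E Wmax) →
      (((E.k + E.l - 1) / E.l : ℕ) : ℚ) / (E.k : ℚ) * (sCC E Wmax : ℚ) ≤ (sCC E W : ℚ) := by
  intro W hW Wmax hWmax _
  have hanti' : StrictAnti fun j => nParty E (P j) := fun j j' h => hanti j j' h
  have hAl : ∀ i, E.l ≤ #(E.A i) := fun i => (hPall i).elim fun j hj => hj ▸ hPl j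
  have hl : 0 < E.l := E.one_le_l
  have hkey : E.k ⌈/⌉ E.l * sCC E Wmax ≤ E.k * sCC E W :=
    calc E.k ⌈/⌉ E.l * sCC E Wmax ≤ E.k ⌈/⌉ E.l * ∑ i ∈ range E.k, partySizes E P i :=
          Nat.mul_le_mul_left _ (hWmax ▸ sCC_le_sum_range_partySizes hPL hPall hPrep hanti' Wmax)
      _ ≤ E.k * ∑ i ∈ range (E.k ⌈/⌉ E.l), partySizes E P i :=
          mul_sum_range_le_mul_sum_range_of_antitone (antitone_extend_val_zero hanti'.antitone)
            ((ceilDiv_le_iff_le_mul hl).2 (Nat.le_mul_of_pos_left _ hl))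
      _ ≤ E.k * sCC E W :=
          Nat.mul_le_mul_left _ (sum_range_partySizes_le_sCC hPL hB hAl hPall hPrep hanti' hW)
  have hk : (0 : ℚ) < E.k := by exact_mod_cast hl.trans_le E.l_le_k
  rw [div_mul_eq_mul_div, div_le_iff₀ hk, mul_comm (sCC E W : ℚ)]
  exact_mod_cast hkey
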